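/- In the dual-adjustment scheme where d(v) is decreased by 1 for EVEN vertices, increased by 1 for ODD vertices, and z(B) is increased by 2 for every maximal blossom, all z-values remain even and the d-values of all vertices in the search structure have the same parity at all times; moreover any edge with both endpoints in the search structures has even reduced weight. -/

import Mathlib

open SimpleGraph

inductive Label where
  | EVEN : Label
  | ODD : Label
  | UNLABELED : Label
deriving DecidableEq

/-- The invariant: all blossom duals are even, the duals of all vertices in the
search structures (the labeled vertices) have the same parity, and every edge with
both endpoints in the search structures has even reduced weight
`ŵ(uv) = d(u) + d(v) + ∑_{u,v ∈ B} z(B) - w(uv)`. -/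
def MatchInv {V : Type*} [DecidableEq V] (G : SimpleGraph V) (w : Sym2 V → ℤ)
    (label : V → Label) (d : V → ℤ) (Bl : Finset (Finset V)) (z : Finset V → ℤ) : Prop :=
  (∀ B ∈ Bl, Even (z B)) ∧
  (∀ u v : V, label u ≠ Label.UNLABELED → label v ≠ Label.UNLABELED →
    d u % 2 = d v % 2) ∧
  (∀ u v : V, G.Adj u v → label u ≠ Label.UNLABELED → label v ≠ Label.UNLABELED →
    Even (d u + d v + ∑ B ∈ Bl.filter (fun B => u ∈ B ∧ v ∈ B), z B - w s(u, v)))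

/-- The invariant holds initially (`d ≡ 1`, `z ≡ 0`) and is preserved by a dual
adjustment which decreases EVEN duals by 1, increases ODD duals by 1, and increases
the dual of every maximal blossom by 2. -/
theorem stmt14 {V : Type*} [Fintype V] [DecidableEq V] (G : SimpleGraph V)
    (w : Sym2 V → ℤ) (hw : ∀ e, w e = 0 ∨ w e = 2)
    (label : V → Label) (d : V → ℤ) (Bl : Finset (Finset V)) (z : Finset V → ℤ)
    (MaxBl : Finset (Finset V)) (hMax : MaxBl ⊆ Bl) :
    MatchInv G w label (fun _ => 1) Bl (fun _ => 0) ∧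
    (MatchInv G w label d Bl z →
      MatchInv G w label
        (fun v => match label v with
          | Label.EVEN => d v - 1
          | Label.ODD => d v + 1
          | Label.UNLABELED => d v)
        Bl
        (fun B => if B ∈ MaxBl then z B + 2 else z B)) := by
  constructor
  · refine ⟨fun B _ => Even.zero, fun u v _ _ => rfl, fun u v _ _ _ => ?_⟩
    simp only [Finset.sum_const_zero]
    rcases hw s(u, v) with h | h <;> rw [h] <;> decide
  · rintro ⟨h1, h2, h3⟩
    refine ⟨?_, ?_, ?_⟩
    · intro B hB
      by_cases h : B ∈ MaxBl <;> simp [h]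
      · exact h1 B hB
      · exact h1 B hB
    · intro u v hu hv
      have := h2 u v hu hv
      cases hlu : label u <;> cases hlv : label v <;> simp_all <;> omega
    · intro u v hadj hu hv
      have hE := h3 u v hadj hu hv
      have hΔ : Even ((∑ B ∈ Bl.filter (fun B => u ∈ B ∧ v ∈ B),
          (if B ∈ MaxBl then z B + 2 else z B)) -
          ∑ B ∈ Bl.filter (fun B => u ∈ B ∧ v ∈ B), z B) := by
        rw [← Finset.sum_sub_distrib]
        apply Finset.even_sum
        intro B _
        by_cases h : B ∈ MaxBl <;> simp [h]
      set S1 := ∑ B ∈ Bl.filter (fun B => u ∈ B ∧ v ∈ B), z B with hS1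
      set S2 := ∑ B ∈ Bl.filter (fun B => u ∈ B ∧ v ∈ B),
          (if B ∈ MaxBl then z B + 2 else z B) with hS2
      rw [Int.even_sub] at hΔ
      rw [Int.even_iff] at hE ⊢
      have hp : S2 % 2 = S1 % 2 := by
        rw [Int.even_iff, Int.even_iff] at hΔ; omega
      cases hlu : label u <;> cases hlv : label v <;> simp_all <;> omega
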